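/- arXiv:1712.02823 — 2 statements merged into one kernel-verified Lean document; each statement's English description precedes it below -/
import Mathlib

section
/- In the Whitney cone setup described in the context, if T_S ≠ ∅ then c · diam(S) ≤ dist(T_S, K) ≤ C · diam(S), where c and C are positive constants depending only on θ and A. -/
open Set Metric MeasureTheory ENNReal Filter Topology

noncomputable abbrev GraphSpace (d m : ℕ) :=
  WithLp 2 (EuclideanSpace ℝ (Fin d) × EuclideanSpace ℝ (Fin m))

/-- Orthogonal projection `Π : ℝⁿ = ℝᵈ × ℝ^{n-d} → ℝᵈ` onto the first factor. -/
noncomputable def proj1 {d m : ℕ} (y : GraphSpace d m) : EuclideanSpace ℝ (Fin d) :=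
  (WithLp.equiv 2 (EuclideanSpace ℝ (Fin d) × EuclideanSpace ℝ (Fin m)) y).1

/-- The subspace `V⊥ = {0} × ℝ^{n-d}`. -/
def VperpSet (d m : ℕ) : Set (GraphSpace d m) := {z | proj1 z = 0}

/-- `y ∈ X(x, V⊥, θ)`, i.e. `dist(y - x, V⊥) < cos θ · |y - x|`. -/
noncomputable def InPerpCone (θ : ℝ) {d m : ℕ} (x y : GraphSpace d m) : Prop :=
  infDist (y - x) (VperpSet d m) < Real.cos θ * dist y x

/-- The graph map `F(t) = (t, f(t))`. -/
noncomputable def graphMap {d m : ℕ} (f : EuclideanSpace ℝ (Fin d) → EuclideanSpace ℝ (Fin m))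
    (t : EuclideanSpace ℝ (Fin d)) : GraphSpace d m :=
  (WithLp.equiv 2 (EuclideanSpace ℝ (Fin d) × EuclideanSpace ℝ (Fin m))).symm (t, f t)

/-- The bad part `B(K)` of `E` inside the ball `B'`. -/
def badPart (θ r : ℝ) {d m : ℕ} (E K B' : Set (GraphSpace d m)) : Set (GraphSpace d m) :=
  {y | y ∈ E ∩ B' ∧ ∀ x ∈ K, ¬ (y ∈ ball x r ∧ InPerpCone θ x y)}

/-- The Whitney piece `T_S = (S × ℝ^{n-d}) ∩ B(K)`. -/
def whitneyPiece {d m : ℕ} (S : Set (EuclideanSpace ℝ (Fin d)))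
    (BK : Set (GraphSpace d m)) : Set (GraphSpace d m) :=
  {y ∈ BK | proj1 y ∈ S}

/-- Distance between two sets. -/
noncomputable def setEDist {α : Type*} [PseudoEMetricSpace α] (s t : Set α) : ℝ≥0∞ :=
  ⨅ y ∈ s, EMetric.infEdist y t

/-- An axis-parallel cube in `ℝᵈ`. -/
def IsCube {d : ℕ} (S : Set (EuclideanSpace ℝ (Fin d))) : Prop :=
  ∃ (c : EuclideanSpace ℝ (Fin d)) (l : ℝ), 0 < l ∧
    S = {t | ∀ i, c i ≤ t i ∧ t i ≤ c i + l}

/-! Since `Π` is `1`-Lipschitz and maps `T_S` into `S`,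
`dist(T_S, K) ≥ dist(S, Π K) ≥ diam S / A`. Conversely, a point `y ∈ T_S` lies outside every
cone `X(x, V⊥, θ)` with `x ∈ K`, which says `|y - x| ≤ |Π y - Π x| / cos θ`; hence
`dist(y, K) ≤ dist(Π y, Π K) / cos θ ≤ (dist(S, Π K) + diam S) / cos θ ≤ (1 + A) diam S / cos θ`.
-/

section SetEDist

variable {α β : Type*} [PseudoEMetricSpace α] [PseudoEMetricSpace β]

lemma setEDist_le_infEDist {s t : Set α} {y : α} (hy : y ∈ s) :
    setEDist s t ≤ infEDist y t :=
  iInf₂_le y hy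

lemma infEDist_le_setEDist_add_ediam {s t : Set α} {y : α} (hy : y ∈ s) :
    infEDist y t ≤ setEDist s t + ediam s := by
  rw [← tsub_le_iff_right]
  refine le_iInf₂ fun z hz => tsub_le_iff_right.2 ?_
  calc infEDist y t ≤ infEDist z t + edist y z := infEDist_le_infEDist_add_edist
    _ ≤ infEDist z t + ediam s := by
      gcongr; exact edist_le_ediam_of_mem hy hz

lemma setEDist_image_le_of_lipschitzWith_one {f : α → β} (hf : LipschitzWith 1 f)
    {s t : Set α} {s' : Set β} (hs : MapsTo f s s') :
    setEDist s' (f '' t) ≤ setEDist s t := by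
  refine le_iInf₂ fun y hy => le_infEDist.2 fun x hx => ?_
  calc setEDist s' (f '' t) ≤ infEDist (f y) (f '' t) := setEDist_le_infEDist (hs hy)
    _ ≤ edist (f y) (f x) := infEDist_le_edist_of_mem (mem_image_of_mem f hx)
    _ ≤ edist y x := by simpa using hf y x

lemma infEDist_le_mul_infEDist_image {f : α → β} {C : ℝ≥0∞} (hC₀ : C ≠ 0) (hC : C ≠ ∞)
    {t : Set α} {y : α} (h : ∀ x ∈ t, edist y x ≤ C * edist (f y) (f x)) :
    infEDist y t ≤ C * infEDist (f y) (f '' t) := by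
  simp_rw [infEDist, iInf_image, ENNReal.mul_iInf_of_ne hC₀ hC]
  exact iInf₂_mono h

end SetEDist

section WhitneyPiece

variable {d m : ℕ}

lemma proj1_sub (u v : GraphSpace d m) : proj1 (u - v) = proj1 u - proj1 v := rfl

lemma proj1_zero : proj1 (0 : GraphSpace d m) = 0 := rfl

lemma lipschitzWith_one_proj1 : LipschitzWith 1 (proj1 : GraphSpace d m → _) :=
  LipschitzWith.of_edist_le fun u v => WithLp.edist_fst_le u v

lemma infDist_VperpSet (w : GraphSpace d m) : infDist w (VperpSet d m) = ‖proj1 w‖ := by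
  have hne : (VperpSet d m).Nonempty := ⟨0, proj1_zero⟩
  refine le_antisymm ?_ ((le_infDist hne).2 fun z hz => ?_)
  · have hw : WithLp.toLp 2 (0, w.snd) ∈ VperpSet d m := by simp [VperpSet, proj1]
    refine (infDist_le_dist_of_mem hw).trans_eq ?_
    rw [dist_eq_norm, WithLp.prod_norm_eq_of_L2]
    simp [proj1]
  · calc ‖proj1 w‖ = ‖proj1 (w - z)‖ := by rw [proj1_sub, hz, sub_zero]
      _ ≤ dist w z := (WithLp.norm_fst_le (x := w - z)).trans_eq (dist_eq_norm w z).symm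

lemma not_inPerpCone_iff {θ : ℝ} {x y : GraphSpace d m} :
    ¬ InPerpCone θ x y ↔ Real.cos θ * dist y x ≤ dist (proj1 y) (proj1 x) := by
  rw [InPerpCone, not_lt, infDist_VperpSet, proj1_sub, dist_eq_norm, dist_eq_norm]

lemma edist_le_mul_edist_proj1_of_mem_badPart {θ r : ℝ} (hθ : 0 < Real.cos θ)
    {E K B' : Set (GraphSpace d m)} {x y : GraphSpace d m} (hy : y ∈ badPart θ r E K B')
    (hx : x ∈ K) (hB' : B' ⊆ ball x r) :
    edist y x ≤ ENNReal.ofReal (1 / Real.cos θ) * edist (proj1 y) (proj1 x) := by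
  have hcone : Real.cos θ * dist y x ≤ dist (proj1 y) (proj1 x) :=
    not_inPerpCone_iff.1 fun hin => hy.2 x hx ⟨hB' hy.1.2, hin⟩
  rw [edist_dist, edist_dist, ← ENNReal.ofReal_mul (by positivity), one_div_mul_eq_div]
  exact ENNReal.ofReal_le_ofReal ((le_div_iff₀' hθ).2 hcone)

lemma setEDist_le_setEDist_whitneyPiece (S : Set (EuclideanSpace ℝ (Fin d)))
    (BK K : Set (GraphSpace d m)) :
    setEDist S (proj1 '' K) ≤ setEDist (whitneyPiece S BK) K :=
  setEDist_image_le_of_lipschitzWith_one lipschitzWith_one_proj1 fun _ hy => hy.2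

lemma setEDist_whitneyPiece_badPart_le {θ r : ℝ} (hθ : 0 < Real.cos θ)
    {E K B' : Set (GraphSpace d m)} (hB' : ∀ x ∈ K, B' ⊆ ball x r)
    {S : Set (EuclideanSpace ℝ (Fin d))} {y : GraphSpace d m}
    (hy : y ∈ whitneyPiece S (badPart θ r E K B')) :
    setEDist (whitneyPiece S (badPart θ r E K B')) K ≤
      ENNReal.ofReal (1 / Real.cos θ) * (setEDist S (proj1 '' K) + ediam S) :=
  calc setEDist (whitneyPiece S (badPart θ r E K B')) K ≤ infEDist y K :=
        setEDist_le_infEDist hy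
    _ ≤ ENNReal.ofReal (1 / Real.cos θ) * infEDist (proj1 y) (proj1 '' K) :=
        infEDist_le_mul_infEDist_image (by simpa using hθ) ofReal_ne_top
          fun x hx => edist_le_mul_edist_proj1_of_mem_badPart hθ hy.1 hx (hB' x hx)
    _ ≤ ENNReal.ofReal (1 / Real.cos θ) * (setEDist S (proj1 '' K) + ediam S) := by
        gcongr; exact infEDist_le_setEDist_add_ediam hy.2

end WhitneyPiece

theorem stmt15 (θ : ℝ) (hθ : θ ∈ Ioo 0 (Real.pi / 2)) (A : ℝ) (hA : 1 ≤ A) :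
    ∃ c C : ℝ, 0 < c ∧ 0 < C ∧
    ∀ (d m : ℕ), 0 < d → 0 < m →
    ∀ (r : ℝ), 0 < r →
    ∀ (E K : Set (GraphSpace d m)), IsCompact K → K ⊆ E →
      EMetric.diam K < ENNReal.ofReal r →
      (∀ x ∈ K, ∀ y ∈ E, y ∈ ball x r → ¬ InPerpCone θ x y) →
    ∀ (f : EuclideanSpace ℝ (Fin d) → EuclideanSpace ℝ (Fin m)),
      LipschitzWith (Real.toNNReal (1 / Real.cos θ)) f →
      (∀ x ∈ K, graphMap f (proj1 x) = x) →
    ∀ (x' : GraphSpace d m) (ρ : ℝ), K ⊆ ball x' ρ →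
      (∀ x ∈ K, ball x' ρ ⊆ ball x r) →
    ∀ (S : Set (EuclideanSpace ℝ (Fin d))), IsCube S →
      Disjoint S (proj1 '' K) →
      setEDist S (proj1 '' K) ≤ ENNReal.ofReal A * EMetric.diam S →
      EMetric.diam S ≤ ENNReal.ofReal A * setEDist S (proj1 '' K) →
      (whitneyPiece S (badPart θ r E K (ball x' ρ))).Nonempty →
      ENNReal.ofReal c * EMetric.diam S ≤
          setEDist (whitneyPiece S (badPart θ r E K (ball x' ρ))) K ∧
        setEDist (whitneyPiece S (badPart θ r E K (ball x' ρ))) K ≤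
          ENNReal.ofReal C * EMetric.diam S := by
  have hcos : 0 < Real.cos θ :=
    Real.cos_pos_of_mem_Ioo ⟨by linarith [hθ.1, Real.pi_pos], hθ.2⟩
  have hA₀ : 0 < A := one_pos.trans_le hA
  refine ⟨1 / A, (1 + A) / Real.cos θ, by positivity, by positivity, ?_⟩
  intro d m _ _ r _ E K _ _ _ _ f _ _ x' ρ _ hB' S _ _ hSK hKS ⟨y, hy⟩
  constructor
  · calc ENNReal.ofReal (1 / A) * ediam S ≤ setEDist S (proj1 '' K) := by
          rwa [one_div, ENNReal.ofReal_inv_of_pos hA₀,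
            ENNReal.inv_mul_le_iff (ENNReal.ofReal_pos.2 hA₀).ne' ofReal_ne_top]
      _ ≤ _ := setEDist_le_setEDist_whitneyPiece S _ K
  · calc _ ≤ ENNReal.ofReal (1 / Real.cos θ) * (setEDist S (proj1 '' K) + ediam S) :=
          setEDist_whitneyPiece_badPart_le hcos hB' hy
      _ ≤ ENNReal.ofReal (1 / Real.cos θ) * (ENNReal.ofReal A * ediam S + ediam S) := by
          gcongr; exact hSK
      _ = ENNReal.ofReal ((1 + A) / Real.cos θ) * ediam S := by
          rw [show (1 + A) / Real.cos θ = 1 / Real.cos θ * (1 + A) by ring,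
            ENNReal.ofReal_mul (by positivity), ENNReal.ofReal_add zero_le_one hA₀.le,
            ENNReal.ofReal_one]
          ring
end

section
/- In the Whitney cone setup described in the context, for every y ∈ T_S one has dist(y, F(ℝ^d)) ≤ C · diam(S), where C depends only on θ and A. -/
/-!
A point `y ∈ T_S` lies over `S`, so `Π y` is within `diam S + dist(S, Π K) ≤ (1 + A) diam S`
of `Π K`. For `x ∈ K` the point `y` avoids the cone `X(x, V⊥, θ)`, whence
`|y - x| ≤ |Π y - Π x| / cos θ`; as `x = F(Π x)` and `f` is `(1 / cos θ)`-Lipschitz, the vertical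
distance from `y` to `F(Π y)` is at most `2 |Π y - Π x| / cos θ`. Taking the infimum over `x ∈ K`
gives the bound with `C = 2 (1 + A) / cos θ`.
-/

open Set Metric MeasureTheory ENNReal Filter Topology

section GraphGeometry

variable {d m : ℕ}

lemma infDist_vperpSet_le_norm_proj1 (z : GraphSpace d m) :
    infDist z (VperpSet d m) ≤ ‖proj1 z‖ := by
  have hmem : WithLp.toLp 2 (0, z.snd) ∈ VperpSet d m := rfl
  refine (infDist_le_dist_of_mem hmem).trans_eq ?_
  rw [WithLp.prod_dist_eq_of_L2]
  simp [proj1]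

lemma cos_mul_dist_le_of_not_inPerpCone {θ : ℝ} {x y : GraphSpace d m}
    (h : ¬ InPerpCone θ x y) : Real.cos θ * dist y x ≤ dist (proj1 y) (proj1 x) :=
  calc Real.cos θ * dist y x ≤ infDist (y - x) (VperpSet d m) := not_lt.1 h
    _ ≤ ‖proj1 (y - x)‖ := infDist_vperpSet_le_norm_proj1 _
    _ = dist (proj1 y) (proj1 x) := (dist_eq_norm _ _).symm

lemma dist_graphMap_proj1_le {f : EuclideanSpace ℝ (Fin d) → EuclideanSpace ℝ (Fin m)} {L : NNReal}
    (hf : LipschitzWith L f) {x y : GraphSpace d m} (hx : graphMap f (proj1 x) = x) :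
    dist y (graphMap f (proj1 y)) ≤ dist y x + L * dist (proj1 y) (proj1 x) := by
  have hsame_fst : dist y (graphMap f (proj1 y)) = dist y.snd (f (proj1 y)) := by
    rw [WithLp.prod_dist_eq_of_L2]
    simp [graphMap, proj1]
  have hx_snd : x.snd = f (proj1 x) := by rw [← hx]; rfl
  calc dist y (graphMap f (proj1 y)) = dist y.snd (f (proj1 y)) := hsame_fst
    _ ≤ dist y.snd x.snd + dist (f (proj1 x)) (f (proj1 y)) := by
        rw [hx_snd]; exact dist_triangle _ _ _
    _ ≤ dist y x + L * dist (proj1 y) (proj1 x) := by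
        gcongr
        · exact WithLp.dist_snd_le y x
        · rw [dist_comm (proj1 y)]; exact hf.dist_le_mul _ _

lemma edist_graphMap_proj1_le_of_not_inPerpCone {θ : ℝ} (hcos : 0 < Real.cos θ)
    {f : EuclideanSpace ℝ (Fin d) → EuclideanSpace ℝ (Fin m)}
    (hf : LipschitzWith (Real.toNNReal (1 / Real.cos θ)) f) {x y : GraphSpace d m}
    (hx : graphMap f (proj1 x) = x) (hxy : ¬ InPerpCone θ x y) :
    edist y (graphMap f (proj1 y)) ≤
      ENNReal.ofReal (2 / Real.cos θ) * edist (proj1 y) (proj1 x) := by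
  rw [edist_dist, edist_dist, ← ENNReal.ofReal_mul (by positivity)]
  refine ENNReal.ofReal_le_ofReal ?_
  have hgraph := dist_graphMap_proj1_le hf hx (y := y)
  rw [Real.coe_toNNReal _ (by positivity)] at hgraph
  have hcone : dist y x ≤ dist (proj1 y) (proj1 x) / Real.cos θ := by
    rw [le_div_iff₀ hcos, mul_comm]
    exact cos_mul_dist_le_of_not_inPerpCone hxy
  calc dist y (graphMap f (proj1 y))
      ≤ dist y x + 1 / Real.cos θ * dist (proj1 y) (proj1 x) := hgraph
    _ ≤ dist (proj1 y) (proj1 x) / Real.cos θ + 1 / Real.cos θ * dist (proj1 y) (proj1 x) := by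
        gcongr
    _ = 2 / Real.cos θ * dist (proj1 y) (proj1 x) := by ring

end GraphGeometry

section InfEDist

variable {α : Type*} [PseudoEMetricSpace α]

lemma infEDist_le_ediam_add_setEDist {S T : Set α} {p : α} (hp : p ∈ S) :
    infEDist p T ≤ ediam S + setEDist S T := by
  rw [setEDist, ENNReal.add_iInf]
  refine le_iInf fun s => ?_
  rw [ENNReal.add_iInf]
  refine le_iInf fun hs => ?_
  calc infEDist p T ≤ edist p s + infEDist s T := infEDist_le_edist_add_infEDist
    _ ≤ ediam S + infEDist s T := by gcongr; exact edist_le_ediam_of_mem hp hs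

lemma le_mul_infEDist_of_forall_le {a c : ℝ≥0∞} (hc₀ : c ≠ 0) (hc : c ≠ ∞) {p : α} {T : Set α}
    (h : ∀ z ∈ T, a ≤ c * edist p z) : a ≤ c * infEDist p T := by
  rw [infEDist, ENNReal.mul_iInf_of_ne hc₀ hc]
  refine le_iInf fun z => ?_
  rw [ENNReal.mul_iInf_of_ne hc₀ hc]
  exact le_iInf (h z)

end InfEDist

theorem stmt16 (θ : ℝ) (hθ : θ ∈ Ioo 0 (Real.pi / 2)) (A : ℝ) (hA : 1 ≤ A) :
    ∃ C : ℝ, 0 < C ∧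
    ∀ (d m : ℕ), 0 < d → 0 < m →
    ∀ (r : ℝ), 0 < r →
    ∀ (E K : Set (GraphSpace d m)), IsCompact K → K ⊆ E →
      EMetric.diam K < ENNReal.ofReal r →
      (∀ x ∈ K, ∀ y ∈ E, y ∈ ball x r → ¬ InPerpCone θ x y) →
    ∀ (f : EuclideanSpace ℝ (Fin d) → EuclideanSpace ℝ (Fin m)),
      LipschitzWith (Real.toNNReal (1 / Real.cos θ)) f →
      (∀ x ∈ K, graphMap f (proj1 x) = x) →
    ∀ (x' : GraphSpace d m) (ρ : ℝ), K ⊆ ball x' ρ →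
      (∀ x ∈ K, ball x' ρ ⊆ ball x r) →
    ∀ (S : Set (EuclideanSpace ℝ (Fin d))), IsCube S →
      Disjoint S (proj1 '' K) →
      setEDist S (proj1 '' K) ≤ ENNReal.ofReal A * EMetric.diam S →
      EMetric.diam S ≤ ENNReal.ofReal A * setEDist S (proj1 '' K) →
      ∀ y ∈ whitneyPiece S (badPart θ r E K (ball x' ρ)),
        EMetric.infEdist y (Set.range (graphMap f)) ≤
          ENNReal.ofReal C * EMetric.diam S := by
  have hcos : 0 < Real.cos θ := Real.cos_pos_of_mem_Ioo ⟨by linarith [hθ.1, Real.pi_pos], hθ.2⟩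
  refine ⟨2 / Real.cos θ * (1 + A), by positivity, ?_⟩
  rintro d m - - r - E K - - - - f hf hgraph x' ρ - hball S - - hSK - y ⟨⟨⟨-, hyB'⟩, hbad⟩, hyS⟩
  have hc₀ : ENNReal.ofReal (2 / Real.cos θ) ≠ 0 := by simpa using hcos
  have hnear : infEDist (proj1 y) (proj1 '' K) ≤ ENNReal.ofReal (1 + A) * ediam S := by
    rw [ENNReal.ofReal_add zero_le_one (by linarith), ENNReal.ofReal_one, add_mul, one_mul]
    exact (infEDist_le_ediam_add_setEDist hyS).trans (by gcongr; exact hSK)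
  calc infEDist y (range (graphMap f))
      ≤ edist y (graphMap f (proj1 y)) := infEDist_le_edist_of_mem (mem_range_self _)
    _ ≤ ENNReal.ofReal (2 / Real.cos θ) * infEDist (proj1 y) (proj1 '' K) := by
        refine le_mul_infEDist_of_forall_le hc₀ ofReal_ne_top (forall_mem_image.2 fun x hx => ?_)
        exact edist_graphMap_proj1_le_of_not_inPerpCone hcos hf (hgraph x hx)
          fun hcone => hbad x hx ⟨hball x hx hyB', hcone⟩
    _ ≤ ENNReal.ofReal (2 / Real.cos θ) * (ENNReal.ofReal (1 + A) * ediam S) := by gcongr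
    _ = ENNReal.ofReal (2 / Real.cos θ * (1 + A)) * ediam S := by
        rw [ENNReal.ofReal_mul (by positivity), mul_assoc]
end
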